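/- For coprime positive integers s and t, there is a bijection between the set of (s,t)-core partitions and the set of order ideals of the poset P_{s,t}; under this bijection, if λ corresponds to the order ideal I and |I| = k, then size(λ) = (Σ_{a ∈ I} a) − k(k−1)/2. Consequently, the generating polynomial Σ_λ q^{size(λ)} over (s,t)-core partitions λ is obtained from Σ_I q^{Σ_{a∈I} a} t^{|I|} (over order ideals I of P_{s,t}) by replacing each power t^k with q^{−k(k−1)/2}. -/

import Mathlib

/-!
A partition `λ₀ ≥ ⋯ ≥ λ_{k-1}` is determined by its β-set `{λ_i + (k - 1 - i)}`, the hook lengths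
of its first column, and every finite set of positive integers is a β-set. The hooks in row `i`
are the differences `β_i - x` with `x < β_i` a non-β-number, so `λ` is an `s`-core exactly when
its β-set is closed under `b ↦ b - s`. A set of positive integers closed under subtracting `s`
and `t` is the same thing as an order ideal of `P_{s,t}`, and for coprime `s, t` the poset is
finite, so every order ideal is a β-set. Finally `Σ β = |λ| + k(k-1)/2`.
-/

/-- A partition: a finite non-increasing list of positive integers. -/
structure CorePartition where
  parts : List ℕ
  sorted : parts.Pairwise (· ≥ ·)
  pos : ∀ p ∈ parts, 0 < p

namespace CorePartition

/-- The size of a partition: the sum of its parts. -/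
def size (p : CorePartition) : ℕ := p.parts.sum

/-- The conjugate partition evaluated at (0-indexed) column `j`:
the number of parts strictly greater than `j`. -/
def conj (p : CorePartition) (j : ℕ) : ℕ := (p.parts.filter (fun x => j < x)).length

/-- The hook length of the (0-indexed) cell `(i, j)` of the Young diagram:
`(λ_i − 1 − j) + (λ'_j − 1 − i) + 1`, i.e. `λ_i − i + λ'_j − j + 1` in 1-indexed terms. -/
def hook (p : CorePartition) (i j : ℕ) : ℕ :=
  (p.parts.getD i 0 - (j + 1)) + (p.conj j - (i + 1)) + 1

/-- A partition is an `s`-core if none of its hook lengths equals `s`. -/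
def IsCore (p : CorePartition) (s : ℕ) : Prop :=
  ∀ i j : ℕ, i < p.parts.length → j < p.parts.getD i 0 → p.hook i j ≠ s

/-- A partition has distinct parts if its parts are strictly decreasing. -/
def Distinct (p : CorePartition) : Prop := p.parts.Pairwise (· > ·)

end CorePartition

/-- `D n` is the set of `(2n+1, 2n+3)`-core partitions with distinct parts. -/
def D (n : ℕ) : Set CorePartition :=
  {p | p.IsCore (2 * n + 1) ∧ p.IsCore (2 * n + 3) ∧ p.Distinct}
/-- The underlying set of the poset `P_{s,t}`: nonnegative integers not of the form
`α·s + β·t` with `α, β` nonnegative integers. -/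
def PosetElems (s t : ℕ) : Set ℕ := {m | ¬ ∃ a b : ℕ, m = a * s + b * t}

/-- The order relation of `P_{s,t}`: `c ≤_P d` iff `d − c = α·s + β·t` for some
nonnegative integers `α, β`. -/
def PosetLe (s t c d : ℕ) : Prop := ∃ a b : ℕ, d = c + a * s + b * t

/-- An order ideal of the poset `P_{s,t}`: a subset `I` of the underlying set such that
`c ∈ I` whenever `c ≤_P d` for some `d ∈ I`. -/
def IsOrderIdeal (s t : ℕ) (I : Set ℕ) : Prop :=
  I ⊆ PosetElems s t ∧
    ∀ ⦃c d : ℕ⦄, c ∈ PosetElems s t → d ∈ I → PosetLe s t c d → c ∈ I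


open Finset

namespace List

def betaList : List ℕ → List ℕ
  | [] => []
  | a :: l => (a + l.length) :: betaList l

@[simp] lemma betaList_nil : betaList [] = [] := rfl

@[simp] lemma betaList_cons (a : ℕ) (l : List ℕ) :
    betaList (a :: l) = (a + l.length) :: betaList l := rfl

@[simp] lemma length_betaList (l : List ℕ) : (betaList l).length = l.length := by
  induction l <;> simp [*]

lemma getElem_betaList (l : List ℕ) (i : ℕ) (hi : i < (betaList l).length) :
    (betaList l)[i] = l[i]'(by simpa using hi) + (l.length - 1 - i) := by
  induction l generalizing i with
  | nil => simp at hi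
  | cons a l ih =>
    cases i with
    | zero => simp
    | succ i =>
      simp only [betaList_cons, getElem_cons_succ, ih i (by simpa using hi), length_cons]
      omega

lemma betaList_injective : Function.Injective betaList := by
  intro l₁ l₂ h
  induction l₁ generalizing l₂ with
  | nil => cases l₂ <;> simp_all
  | cons a l₁ ih =>
    cases l₂ with
    | nil => simp at h
    | cons b l₂ =>
      simp only [betaList_cons, cons.injEq] at h
      have hlen : l₁.length = l₂.length := by simpa using congrArg length h.2
      rw [ih h.2]
      congr
      omega

lemma sum_betaList (l : List ℕ) : (betaList l).sum = l.sum + l.length.choose 2 := by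
  induction l with
  | nil => simp
  | cons a l ih =>
    simp only [betaList_cons, sum_cons, ih, length_cons, Nat.choose_succ_succ,
      Nat.choose_one_right]
    ring

lemma isChain_betaList_iff :
    ∀ {l : List ℕ}, (betaList l).IsChain (· > ·) ↔ l.IsChain (· ≥ ·)
  | [] => by simp
  | [a] => by simp
  | a :: b :: l => by
    have ih := isChain_betaList_iff (l := b :: l)
    simp only [betaList_cons, length_cons, isChain_cons_cons] at ih ⊢
    rw [ih]
    exact and_congr_left fun _ => by omega

lemma length_le_of_nodup_of_forall_mem_Icc {L : List ℕ} {b : ℕ} (hL : L.Nodup)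
    (h : ∀ x ∈ L, x ∈ Icc 1 b) : L.length ≤ b := by
  simpa [toFinset_card_of_nodup hL] using card_le_card (s := L.toFinset) (t := Icc 1 b)
    (fun x hx => h x (mem_toFinset.1 hx))

lemma exists_betaList_eq : ∀ {L : List ℕ}, L.Pairwise (· > ·) → (∀ x ∈ L, 0 < x) →
    ∃ l : List ℕ, l.Pairwise (· ≥ ·) ∧ (∀ x ∈ l, 0 < x) ∧ betaList l = L
  | [], _, _ => ⟨[], by simp⟩
  | b :: L, hL, hpos => by
    rw [pairwise_cons] at hL
    have hpos' x (hx : x ∈ L) := hpos x (mem_cons_of_mem _ hx)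
    obtain ⟨l, -, hlpos, rfl⟩ := exists_betaList_eq hL.2 hpos'
    have hlen : l.length ≤ b - 1 := by
      simpa using length_le_of_nodup_of_forall_mem_Icc hL.2.nodup
        fun x hx => Finset.mem_Icc.2 ⟨hpos' x hx, Nat.le_sub_one_of_lt (hL.1 x hx)⟩
    have hb := hpos b mem_cons_self
    have hbeta : betaList ((b - l.length) :: l) = b :: betaList l := by
      simp only [betaList_cons, cons.injEq, and_true]
      omega
    refine ⟨(b - l.length) :: l, ?_, ?_, hbeta⟩
    · rw [← isChain_iff_pairwise, ← isChain_betaList_iff, hbeta, isChain_iff_pairwise]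
      exact pairwise_cons.2 hL
    · simp only [mem_cons, forall_eq_or_imp]
      exact ⟨by omega, hlpos⟩

lemma length_filter_eq_card_filter_range (l : List ℕ) (P : ℕ → Bool) (d : ℕ) :
    (l.filter P).length = #{i ∈ Finset.range l.length | P (l.getD i d)} := by
  induction l with
  | nil => simp
  | cons a l ih =>
    rw [Finset.card_filter, List.length_cons, Finset.sum_range_succ', ← Finset.card_filter]
    simp only [List.filter_cons, List.getD_cons_succ, List.getD_cons_zero, ← ih]
    split <;> simp [*]

end List

lemma Finset.lt_card_filter_range_iff {P : ℕ → Prop} [DecidablePred P]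
    (hP : ∀ ⦃i j⦄, i ≤ j → P j → P i) {n i : ℕ} (hi : i < n) :
    i < #{m ∈ range n | P m} ↔ P i := by
  constructor
  · intro h
    by_contra hPi
    have : {m ∈ range n | P m} ⊆ range i := fun m hm => by
      simp only [mem_filter, mem_range] at hm ⊢
      by_contra hmi
      exact hPi (hP (not_lt.1 hmi) hm.2)
    simpa using (card_le_card this).trans_lt' h
  · intro hPi
    have : range (i + 1) ⊆ {m ∈ range n | P m} := fun m hm => by
      simp only [mem_filter, mem_range] at hm ⊢
      exact ⟨by omega, hP (by omega) hPi⟩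
    simpa using card_le_card this

section OrderIdeal

variable {s t : ℕ} {I : Set ℕ}

theorem finite_posetElems (hst : s.Coprime t) : (PosetElems s t).Finite := by
  have hgcd : Nat.setGcd {s, t} = 1 := Nat.dvd_one.1 <| hst ▸
    Nat.dvd_gcd (Nat.setGcd_dvd_of_mem (by simp)) (Nat.setGcd_dvd_of_mem (by simp))
  refine (Nat.finite_setOfPred_setGcd_dvd_and_mem_span {s, t}).subset fun n hn => ⟨?_, ?_⟩
  · simp [hgcd]
  · rw [Ideal.mem_span_pair]
    rintro ⟨a, b, h⟩
    exact hn ⟨a, b, by simp [← h]⟩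

lemma sub_mul_mem_of_forall_sub_mem (h : ∀ b ∈ I, s ≤ b → b - s ∈ I) (a : ℕ) :
    ∀ b ∈ I, a * s ≤ b → b - a * s ∈ I := by
  induction a with
  | zero => simp
  | succ a ih =>
    intro b hb hab
    rw [add_one_mul] at hab
    have := ih (b - s) (h b hb (by omega)) (by omega)
    rwa [Nat.sub_sub, add_comm, ← add_one_mul] at this

theorem isOrderIdeal_iff (h0 : 0 ∉ I) :
    IsOrderIdeal s t I ↔
      (∀ b ∈ I, s ≤ b → b - s ∈ I) ∧ (∀ b ∈ I, t ≤ b → b - t ∈ I) := by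
  constructor
  · rintro ⟨hsub, hdown⟩
    refine ⟨fun b hb hsb => hdown ?_ hb ⟨1, 0, by omega⟩,
      fun b hb htb => hdown ?_ hb ⟨0, 1, by omega⟩⟩
    · rintro ⟨a, c, h⟩
      exact hsub hb ⟨a + 1, c, by rw [add_one_mul]; omega⟩
    · rintro ⟨a, c, h⟩
      exact hsub hb ⟨a, c + 1, by rw [add_one_mul]; omega⟩
  · rintro ⟨hs, ht⟩
    have hdown : ∀ ⦃c d⦄, d ∈ I → PosetLe s t c d → c ∈ I := by
      rintro c d hd ⟨a, b, rfl⟩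
      have := sub_mul_mem_of_forall_sub_mem ht b _
        (sub_mul_mem_of_forall_sub_mem hs a _ hd (by omega)) (by omega)
      rwa [show c + a * s + b * t - a * s - b * t = c by omega] at this
    exact ⟨fun b hb ⟨a, c, h⟩ => h0 (hdown hb ⟨a, c, by omega⟩),
      fun _ _ _ hd hcd => hdown hd hcd⟩

end OrderIdeal

namespace CorePartition

variable (p : CorePartition)

-- The β-number of row `i`: the hook length of its first cell.
def beta (i : ℕ) : ℕ := p.parts.getD i 0 + (p.parts.length - 1 - i)

def betaSet : Finset ℕ := (List.betaList p.parts).toFinset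

-- The non-β-number attached to column `j`: the hook length of the cell `(i, j)` is
-- `beta i - gap j`.
def gap (j : ℕ) : ℕ := j + (p.parts.length - p.conj j)

lemma getD_antitone : Antitone (p.parts.getD · 0) := by
  intro i j hij
  by_cases hj : j < p.parts.length
  · simp only [List.getD_eq_getElem _ _ hj, List.getD_eq_getElem _ _ (hij.trans_lt hj)]
    exact p.sorted.rel_get_of_le (a := ⟨i, hij.trans_lt hj⟩) (b := ⟨j, hj⟩) hij
  · simp only [List.getD_eq_default _ _ (not_lt.1 hj), zero_le]

lemma getD_pos {i : ℕ} (hi : i < p.parts.length) : 0 < p.parts.getD i 0 := by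
  rw [List.getD_eq_getElem _ _ hi]
  exact p.pos _ (List.getElem_mem hi)

lemma beta_antitone : Antitone p.beta := fun i j hij =>
  Nat.add_le_add (p.getD_antitone hij) (by omega)

lemma pairwise_betaList : (List.betaList p.parts).Pairwise (· > ·) := by
  rw [← List.isChain_iff_pairwise, List.isChain_betaList_iff, List.isChain_iff_pairwise]
  exact p.sorted

lemma mem_betaSet {x : ℕ} : x ∈ p.betaSet ↔ ∃ i < p.parts.length, p.beta i = x := by
  simp only [betaSet, List.mem_toFinset, List.mem_iff_getElem, List.getElem_betaList,
    List.length_betaList, beta]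
  refine exists_congr fun i =>
    ⟨fun ⟨hi, h⟩ => ⟨hi, ?_⟩, fun ⟨hi, h⟩ => ⟨hi, ?_⟩⟩ <;> rwa [List.getD_eq_getElem _ _ hi] at *

lemma zero_notMem_betaSet : 0 ∉ p.betaSet := by
  rw [mem_betaSet]
  rintro ⟨i, hi, h⟩
  have := p.getD_pos hi
  simp only [beta] at h
  omega

lemma card_betaSet : #p.betaSet = p.parts.length := by
  rw [betaSet, List.toFinset_card_of_nodup p.pairwise_betaList.nodup, List.length_betaList]

lemma size_add_choose_two : p.size + (#p.betaSet).choose 2 = ∑ x ∈ p.betaSet, x := by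
  rw [card_betaSet, betaSet, List.sum_toFinset _ p.pairwise_betaList.nodup, List.map_id',
    List.sum_betaList, size]

lemma betaSet_injective : Function.Injective betaSet := by
  intro p q h
  have hparts : p.parts = q.parts := List.betaList_injective <|
    p.pairwise_betaList.eq_of_mem_iff q.pairwise_betaList
      fun x => by simpa [betaSet] using Finset.ext_iff.1 h x
  cases p; cases q; congr

lemma exists_betaSet_eq (F : Finset ℕ) (hF : ∀ x ∈ F, 0 < x) :
    ∃ p : CorePartition, p.betaSet = F := by
  have hsort : (F.sort (· ≥ ·)).Pairwise (· > ·) :=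
    (F.pairwise_sort _).imp₂ (fun _ _ hge hne => lt_of_le_of_ne hge hne.symm) (F.sort_nodup _)
  obtain ⟨l, hl, hpos, hbeta⟩ :=
    List.exists_betaList_eq hsort fun x hx => hF x ((F.mem_sort _).1 hx)
  exact ⟨⟨l, hl, hpos⟩, by rw [betaSet, hbeta, Finset.sort_toFinset]⟩

lemma conj_le (j : ℕ) : p.conj j ≤ p.parts.length := List.length_filter_le _ _

lemma conj_eq_card (j : ℕ) :
    p.conj j = #{i ∈ range p.parts.length | j < p.parts.getD i 0} := by
  rw [conj, List.length_filter_eq_card_filter_range _ _ 0]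
  simp only [decide_eq_true_eq]

lemma lt_conj_iff {i : ℕ} (hi : i < p.parts.length) (j : ℕ) :
    i < p.conj j ↔ j < p.parts.getD i 0 := by
  rw [conj_eq_card]
  exact lt_card_filter_range_iff (fun _ _ hab h => h.trans_le (p.getD_antitone hab)) hi

lemma hook_add_gap {i j : ℕ} (hij : j < p.parts.getD i 0) : p.hook i j + p.gap j = p.beta i := by
  have hi : i < p.parts.length := by
    by_contra h
    rw [List.getD_eq_default _ _ (not_lt.1 h)] at hij
    exact Nat.not_lt_zero _ hij
  have := (p.lt_conj_iff hi j).2 hij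
  have := p.conj_le j
  simp only [hook, gap, beta]
  omega

lemma gap_notMem_betaSet (j : ℕ) : p.gap j ∉ p.betaSet := by
  rw [mem_betaSet]
  rintro ⟨m, hm, h⟩
  have := p.conj_le j
  simp only [beta, gap] at h
  rcases lt_or_ge m (p.conj j) with hmj | hmj
  · have := (p.lt_conj_iff hm j).1 hmj
    omega
  · have := mt (p.lt_conj_iff hm j).2 (not_lt.2 hmj)
    omega

lemma exists_gap_eq {i x : ℕ} (hi : i < p.parts.length) (hx : x < p.beta i)
    (hxβ : x ∉ p.betaSet) : ∃ j < p.parts.getD i 0, p.gap j = x := by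
  set k := p.parts.length with hk
  -- `x` lies in column `x - (k - c)`: `x` minus the number `k - c` of β-numbers below it.
  set c := #{m ∈ range k | x < p.beta m}
  have hc : ∀ m < k, m < c ↔ x < p.beta m := fun m hm =>
    lt_card_filter_range_iff (fun _ _ hab h => h.trans_le (p.beta_antitone hab)) hm
  have hck : c ≤ k := (card_filter_le _ _).trans (card_range k).le
  have hbeta_ne : ∀ m < k, p.beta m ≠ x := fun m hm h => hxβ (p.mem_betaSet.2 ⟨m, hm, h⟩)
  have hx_of_le : ∀ m < k, c ≤ m → p.beta m < x := fun m hm hcm =>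
    lt_of_le_of_ne (not_lt.1 ((hc m hm).not.1 (not_lt.2 hcm))) (hbeta_ne m hm)
  have hkc : k - c ≤ x := by
    rcases lt_or_ge c k with hck' | hck'
    · have h₁ := hx_of_le c hck' le_rfl
      have h₂ := p.getD_pos hck'
      simp only [beta, ← hk] at h₁ h₂
      omega
    · omega
  have hrow : ∀ m < k, x - (k - c) < p.parts.getD m 0 ↔ m < c := by
    intro m hm
    constructor
    · intro h
      by_contra hmc
      have h₁ := hx_of_le c (by omega) le_rfl
      have h₂ := p.getD_antitone (not_lt.1 hmc)
      simp only [beta, ← hk] at h₁ h₂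
      omega
    · intro hmc
      have h₁ := (hc (c - 1) (by omega)).1 (by omega)
      have h₂ := p.getD_antitone (show m ≤ c - 1 by omega)
      simp only [beta, ← hk] at h₁ h₂
      omega
  have hconj : p.conj (x - (k - c)) = c := by
    rw [conj_eq_card, show {m ∈ range k | x - (k - c) < p.parts.getD m 0} = range c by
      ext m
      simp only [mem_filter, mem_range]
      exact ⟨fun h => (hrow m h.1).1 h.2, fun h => ⟨by omega, (hrow m (by omega)).2 h⟩⟩]
    exact card_range c
  refine ⟨x - (k - c), (hrow i hi).2 ((hc i hi).2 hx), ?_⟩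
  simp only [gap, hconj]
  omega

theorem isCore_iff (s : ℕ) :
    p.IsCore s ↔ ∀ b ∈ p.betaSet, s ≤ b → b - s ∈ p.betaSet := by
  constructor
  · intro hcore b hb hsb
    by_contra hbs
    obtain ⟨i, hi, rfl⟩ := p.mem_betaSet.1 hb
    have hlt : p.beta i - s < p.beta i := lt_of_le_of_ne (Nat.sub_le _ _) fun h => hbs (by rwa [h])
    obtain ⟨j, hj, hgap⟩ := p.exists_gap_eq hi hlt hbs
    exact hcore i j hi hj (by have := p.hook_add_gap hj; omega)
  · intro hclosed i j hi hj hhook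
    have hsum := p.hook_add_gap hj
    have := hclosed (p.beta i) (p.mem_betaSet.2 ⟨i, hi, rfl⟩) (by omega)
    rw [show p.beta i - s = p.gap j by omega] at this
    exact p.gap_notMem_betaSet j this

theorem isCore_and_isCore_iff (s t : ℕ) :
    p.IsCore s ∧ p.IsCore t ↔ IsOrderIdeal s t p.betaSet := by
  rw [isOrderIdeal_iff (by simpa using p.zero_notMem_betaSet), p.isCore_iff, p.isCore_iff]
  simp only [Finset.mem_coe]

theorem bijOn_betaSet {s t : ℕ} (hst : s.Coprime t) :
    Set.BijOn (fun p : CorePartition => (p.betaSet : Set ℕ))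
      {p | p.IsCore s ∧ p.IsCore t} {I | IsOrderIdeal s t I} := by
  refine ⟨fun p hp => (p.isCore_and_isCore_iff s t).1 hp,
    fun p _ q _ h => betaSet_injective (Finset.coe_injective h), fun I hI => ?_⟩
  obtain ⟨F, rfl⟩ := ((finite_posetElems hst).subset hI.1).exists_finset_coe
  obtain ⟨p, rfl⟩ := exists_betaSet_eq F fun x hx =>
    Nat.pos_of_ne_zero fun h => hI.1 hx ⟨0, 0, by simp [h]⟩
  exact ⟨p, (p.isCore_and_isCore_iff s t).2 hI, rfl⟩

end CorePartition

theorem anderson_bijection_general (s t : ℕ) (hst : Nat.Coprime s t) :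
    (∃ f : {p : CorePartition // p.IsCore s ∧ p.IsCore t} ≃
        {I : Set ℕ // IsOrderIdeal s t I},
      ∀ p : {p : CorePartition // p.IsCore s ∧ p.IsCore t},
        (p : CorePartition).size
            + (f p : Set ℕ).ncard * ((f p : Set ℕ).ncard - 1) / 2
          = ∑ᶠ a ∈ (f p : Set ℕ), a) ∧
    (∀ q : ℝ, q ≠ 0 →
      (∑ᶠ p ∈ {p : CorePartition | p.IsCore s ∧ p.IsCore t},
          q ^ (CorePartition.size p))
        = ∑ᶠ I ∈ {I : Set ℕ | IsOrderIdeal s t I},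
            q ^ ((∑ᶠ a ∈ I, (a : ℤ))
              - (I.ncard : ℤ) * ((I.ncard : ℤ) - 1) / 2)) := by
  have hbij := CorePartition.bijOn_betaSet hst
  have hsize (p : CorePartition) : p.size + (p.betaSet : Set ℕ).ncard
      * ((p.betaSet : Set ℕ).ncard - 1) / 2 = ∑ᶠ a ∈ (p.betaSet : Set ℕ), a := by
    rw [Set.ncard_coe_finset, ← Nat.choose_two_right, finsum_mem_coe_finset]
    exact p.size_add_choose_two
  refine ⟨⟨hbij.equiv _, fun p => hsize p.1⟩, fun q _ =>
    finsum_mem_eq_of_bijOn _ hbij fun p _ => ?_⟩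
  have hcast (n : ℕ) : ((n * (n - 1) / 2 : ℕ) : ℤ) = n * (n - 1) / 2 := by
    rcases n with _ | n <;> simp
  rw [← zpow_natCast, ← Nat.cast_finsum_mem (Finset.finite_toSet _), ← hsize p, Nat.cast_add,
    hcast, add_sub_cancel_right]

/-- Anderson's bijection: for coprime positive integers `s`, `t`, there is a bijection
between `(s,t)`-core partitions and order ideals of `P_{s,t}`, under which a partition
of size `size(λ)` corresponds to an ideal `I` with `|I| = k` satisfying
`size(λ) = (Σ_{a ∈ I} a) − k(k−1)/2`.  Consequently, the generating polynomial
`Σ_λ q^{size(λ)}` is obtained from `Σ_I q^{Σ_{a ∈ I} a} t^{|I|}` by replacing each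
power `t^k` with `q^{−k(k−1)/2}`. -/
theorem anderson_bijection (s t : ℕ) (hs : 0 < s) (ht : 0 < t) (hst : Nat.Coprime s t) :
    (∃ f : {p : CorePartition // p.IsCore s ∧ p.IsCore t} ≃
        {I : Set ℕ // IsOrderIdeal s t I},
      ∀ p : {p : CorePartition // p.IsCore s ∧ p.IsCore t},
        (p : CorePartition).size
            + (f p : Set ℕ).ncard * ((f p : Set ℕ).ncard - 1) / 2
          = ∑ᶠ a ∈ (f p : Set ℕ), a) ∧
    (∀ q : ℝ, q ≠ 0 →
      (∑ᶠ p ∈ {p : CorePartition | p.IsCore s ∧ p.IsCore t},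
          q ^ (CorePartition.size p))
        = ∑ᶠ I ∈ {I : Set ℕ | IsOrderIdeal s t I},
            q ^ ((∑ᶠ a ∈ I, (a : ℤ))
              - (I.ncard : ℤ) * ((I.ncard : ℤ) - 1) / 2)) :=
  anderson_bijection_general s t hst
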